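/- (Efficiency hierarchy, Eq. 7c) Let q satisfy 2√2/3 < q < 1. Then the reduced efficiency η(x) = −x(x + q)/(q·x + 1), evaluated at the six optimal force ratios, satisfies the strict chain η(x_mdf) < η(x_MPO) < η(x_MPη) < η(x_MΩ) < η(x_MEF) < η(x_Mη), where η(x_mdf) = 0. -/

import Mathlib

/-- Optimal force ratio for minimum dissipation function: `x_mdf = −q`. -/
noncomputable def xmdf (q : ℝ) : ℝ := -q

/-- Optimal force ratio for maximum power output: `x_MPO = −q/2`. -/
noncomputable def xMPO (q : ℝ) : ℝ := -q / 2

/-- Optimal force ratio for maximum efficiency: `x_Mη = −q/(1 + √(1 − q²))`. -/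
noncomputable def xMeta (q : ℝ) : ℝ := -q / (1 + Real.sqrt (1 - q ^ 2))

/-- Optimal force ratio for maximum ecological function: `x_MEF = −3q/4`. -/
noncomputable def xMEF (q : ℝ) : ℝ := -(3 * q) / 4

/-- Optimal force ratio for maximum omega function:
`x_MΩ = −q·(4 − q² + 4√(1 − q²))/(4·(1 + √(1 − q²))²)`. -/
noncomputable def xMOmega (q : ℝ) : ℝ :=
  -(q * (4 - q ^ 2 + 4 * Real.sqrt (1 - q ^ 2))) / (4 * (1 + Real.sqrt (1 - q ^ 2)) ^ 2)

/-- Optimal force ratio for maximum efficient power: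
`x_MPη = −(4 + q² − √(16 − 16q² + q⁴))/(6q)`. -/
noncomputable def xMPeta (q : ℝ) : ℝ :=
  -(4 + q ^ 2 - Real.sqrt (16 - 16 * q ^ 2 + q ^ 4)) / (6 * q)

/-- Reduced efficiency `η(x) = −x(x + q)/(q·x + 1)`. -/
noncomputable def effX (q x : ℝ) : ℝ := -(x * (x + q)) / (q * x + 1)

/-!
Substituting the optimal force ratios into `η` directly leads to nested radicals; instead one
uses that `η` is strictly decreasing on `[x_Mη, 0]`. Indeed
`η(y) − η(x) = (x − y)(qxy + x + y + q)/((qx + 1)(qy + 1))`, and the middle factor vanishes at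
`x = y = x_Mη`, a root of `qx² + 2x + q`, and grows in both variables to the right of it.
Since `η(x_mdf) = η(0) = 0`, the hierarchy becomes the ordering
`x_Mη < x_MEF < x_MΩ < x_MPη < x_MPO < 0` of the force ratios. With `s = √(1 − q²)` each link
is elementary; only `x_Mη < x_MEF`, which amounts to `s < 1/3`, needs `q > 2√2/3`.
-/

open Real Set

lemma effX_zero (q : ℝ) : effX q 0 = 0 := by
  simp [effX]

lemma effX_xmdf (q : ℝ) : effX q (xmdf q) = 0 := by
  simp [effX, xmdf]

lemma effX_sub_effX (q x y : ℝ) (hx : q * x + 1 ≠ 0) (hy : q * y + 1 ≠ 0) :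
    effX q x - effX q y = (y - x) * (q * x * y + x + y + q) / ((q * x + 1) * (q * y + 1)) := by
  unfold effX
  rw [div_sub_div _ _ hx hy]
  congr 1
  ring

lemma xMeta_isRoot {q : ℝ} (hq : q ^ 2 ≤ 1) : q * xMeta q ^ 2 + 2 * xMeta q + q = 0 := by
  have hs : √(1 - q ^ 2) ^ 2 = 1 - q ^ 2 := sq_sqrt (by linarith)
  have hpos : 0 < 1 + √(1 - q ^ 2) := by positivity
  unfold xMeta
  field_simp
  linear_combination q * hs

lemma one_add_mul_xMeta_pos {q : ℝ} (hq : q ^ 2 < 1) : 0 < 1 + q * xMeta q := by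
  have hpos : 0 < 1 + √(1 - q ^ 2) := by positivity
  have hmul : q * xMeta q = -q ^ 2 / (1 + √(1 - q ^ 2)) := by
    unfold xMeta
    ring
  rw [hmul, neg_div, ← sub_eq_add_neg, sub_pos, div_lt_one hpos]
  linarith [sqrt_nonneg (1 - q ^ 2)]

theorem effX_strictAntiOn {q : ℝ} (hq0 : 0 ≤ q) (hq1 : q < 1) :
    StrictAntiOn (effX q) (Icc (xMeta q) 0) := by
  set c := xMeta q
  have hq2 : q ^ 2 < 1 := by nlinarith
  have hc : 0 < 1 + q * c := one_add_mul_xMeta_pos hq2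
  have hroot : q * c ^ 2 + 2 * c + q = 0 := xMeta_isRoot hq2.le
  rintro x ⟨hcx, -⟩ y ⟨hcy, -⟩ hxy
  have hqx : 0 < q * x + 1 := by nlinarith
  have hqy : 0 < q * y + 1 := by nlinarith
  -- expanding around the root `c` leaves only nonnegative terms
  have hmid : q * x * y + x + y + q = (x - c + (y - c)) * (1 + q * c) + q * (x - c) * (y - c) := by
    linear_combination hroot
  have hmid_pos : 0 < q * x * y + x + y + q := by
    rw [hmid]
    have : 0 ≤ q * (x - c) * (y - c) := by
      have := sub_nonneg.2 hcx
      have := sub_nonneg.2 hcy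
      positivity
    nlinarith
  have hdiff := effX_sub_effX q x y hqx.ne' hqy.ne'
  have : 0 < effX q x - effX q y := by
    rw [hdiff]
    have := sub_pos.2 hxy
    positivity
  linarith

section ForceRatios

variable {q : ℝ}

lemma xMOmega_eq (hq : q ^ 2 ≤ 1) :
    xMOmega q = -(q * (3 + √(1 - q ^ 2))) / (4 * (1 + √(1 - q ^ 2))) := by
  have hs : √(1 - q ^ 2) ^ 2 = 1 - q ^ 2 := sq_sqrt (by linarith)
  have hpos : 0 < 1 + √(1 - q ^ 2) := by positivity
  unfold xMOmega
  field_simp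
  linear_combination q * hs

lemma xMeta_lt_xMEF (hq : 0 < q) (h : 8 / 9 < q ^ 2) : xMeta q < xMEF q := by
  have hs : √(1 - q ^ 2) < 1 / 3 := by
    rw [sqrt_lt' (by norm_num)]
    linarith
  have hpos : 0 < 1 + √(1 - q ^ 2) := by positivity
  unfold xMeta xMEF
  rw [div_lt_div_iff₀ hpos (by norm_num)]
  nlinarith

lemma xMEF_lt_xMOmega (hq0 : 0 < q) (hq1 : q < 1) : xMEF q < xMOmega q := by
  have hs : 0 < √(1 - q ^ 2) := sqrt_pos.2 (by nlinarith)
  rw [xMOmega_eq (by nlinarith)]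
  unfold xMEF
  rw [div_lt_div_iff₀ (by norm_num) (by positivity)]
  nlinarith

lemma xMOmega_lt_xMPeta (hq0 : 0 < q) (hq1 : q < 1) : xMOmega q < xMPeta q := by
  set s := √(1 - q ^ 2)
  set t := √(16 - 16 * q ^ 2 + q ^ 4)
  have hs2 : s ^ 2 = 1 - q ^ 2 := sq_sqrt (by nlinarith)
  have ht2 : t ^ 2 = 16 - 16 * q ^ 2 + q ^ 4 := sq_sqrt (by nlinarith)
  have hs0 : 0 ≤ s := sqrt_nonneg _
  have hs1 : s < 1 := by nlinarith
  -- `4t² − (1 + 6s + s²)² = 3(1 − s)⁴` once `q²` is eliminated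
  have hkey : 1 + 6 * s + s ^ 2 < 2 * t := by
    refine lt_of_pow_lt_pow_left₀ 2 (by positivity) ?_
    have : 0 < 3 * (1 - s) ^ 4 := by
      have := sub_pos.2 hs1
      positivity
    nlinarith
  rw [xMOmega_eq (by nlinarith)]
  unfold xMPeta
  rw [div_lt_div_iff₀ (by positivity) (by positivity)]
  nlinarith [mul_pos (by positivity : (0 : ℝ) < 1 + s) (sub_pos.2 hkey)]

lemma xMPeta_lt_xMPO (hq0 : 0 < q) (hq1 : q ^ 2 < 2) : xMPeta q < xMPO q := by
  have ht : √(16 - 16 * q ^ 2 + q ^ 4) < 4 - 2 * q ^ 2 := by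
    rw [sqrt_lt' (by linarith)]
    nlinarith [pow_pos hq0 4]
  unfold xMPeta xMPO
  rw [div_lt_div_iff₀ (by positivity) (by norm_num)]
  nlinarith

end ForceRatios

/-- (Efficiency hierarchy, Eq. 7c) For `2√2/3 < q < 1`, the reduced efficiency evaluated
at the six optimal force ratios satisfies
`η(x_mdf) < η(x_MPO) < η(x_MPη) < η(x_MΩ) < η(x_MEF) < η(x_Mη)`, with `η(x_mdf) = 0`. -/
theorem efficiency_hierarchy (q : ℝ) (hq0 : 2 * Real.sqrt 2 / 3 < q) (hq1 : q < 1) :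
    effX q (xmdf q) = 0 ∧
    effX q (xmdf q) < effX q (xMPO q) ∧
    effX q (xMPO q) < effX q (xMPeta q) ∧
    effX q (xMPeta q) < effX q (xMOmega q) ∧
    effX q (xMOmega q) < effX q (xMEF q) ∧
    effX q (xMEF q) < effX q (xMeta q) := by
  have hq : 0 < q := lt_trans (by positivity) hq0
  have h89 : 8 / 9 < q ^ 2 := by
    have := pow_lt_pow_left₀ hq0 (by positivity) two_ne_zero
    rw [div_pow, mul_pow, sq_sqrt zero_le_two] at this
    linarith
  have hMEF := xMeta_lt_xMEF hq h89
  have hMOmega := xMEF_lt_xMOmega hq hq1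
  have hMPeta := xMOmega_lt_xMPeta hq hq1
  have hMPO := xMPeta_lt_xMPO hq (by nlinarith)
  have hzero : xMPO q < 0 := by unfold xMPO; linarith
  have anti := effX_strictAntiOn hq.le hq1
  refine ⟨effX_xmdf q, ?_, ?_, ?_, ?_, ?_⟩
  · rw [effX_xmdf, ← effX_zero q]
    exact anti ⟨by linarith, by linarith⟩ ⟨by linarith, le_rfl⟩ hzero
  · exact anti ⟨by linarith, by linarith⟩ ⟨by linarith, by linarith⟩ hMPO
  · exact anti ⟨by linarith, by linarith⟩ ⟨by linarith, by linarith⟩ hMPeta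
  · exact anti ⟨by linarith, by linarith⟩ ⟨by linarith, by linarith⟩ hMOmega
  · exact anti ⟨le_rfl, by linarith⟩ ⟨by linarith, by linarith⟩ hMEF
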